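/- arXiv:1402.6825 — 2 statements merged into one kernel-verified Lean document; each statement's English description precedes it below -/
import Mathlib

section
/- Let a ∈ ℝ, e := (a, 0, 1) ∈ ℝ³, and let u₀ ∈ ℝ³ be orthogonal to e. Define f(x) := 1 + a·x₁ + x₃ and u(x) := cos(f(x)²/(2|e|))·u₀ + sin(f(x)²/(2|e|))·(u₀ × e)/|e|. Then u satisfies curl u = f·u and div u = 0 on all of ℝ³. -/
/-!
The field is a plane wave `u x = U (f x)` with `f x = e ⬝ᵥ x + 1` and
`U t = cos (t² / 2|e|) • u₀ + sin (t² / 2|e|) • w`, `w = (u₀ × e) / |e|`; for a plane wave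
`curl u x = e × U' (f x)` and `div u x = e ⬝ U' (f x)`. Since `u₀ ⟂ e`, the pair `u₀, w` spans
`e⊥`, and `U' t` is `t / |e|` times `U t` turned by a quarter turn (`u₀ ↦ w ↦ -u₀`) in that plane,
whereas `e × ·` acts there as `|e|` times the opposite quarter turn (`e × u₀ = -|e| w`,
`e × w = |e| u₀`). Hence `e × U' t = t • U t`, and `e ⬝ U' t = 0`.
-/

/-- Vectors in ℝ³. -/
abbrev V3 := Fin 3 → ℝ

/-- Partial derivative of a scalar function on ℝ³. -/
noncomputable def pd (f : V3 → ℝ) (i : Fin 3) (x : V3) : ℝ :=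
  fderiv ℝ f x (Pi.single i 1)

/-- Gradient. -/
noncomputable def grad (f : V3 → ℝ) (x : V3) : V3 := fun i => pd f i x

/-- Divergence. -/
noncomputable def div3 (u : V3 → V3) (x : V3) : ℝ :=
  ∑ i, pd (fun y => u y i) i x

/-- Curl. -/
noncomputable def curl3 (u : V3 → V3) (x : V3) : V3 :=
  ![pd (fun y => u y 2) 1 x - pd (fun y => u y 1) 2 x,
    pd (fun y => u y 0) 2 x - pd (fun y => u y 2) 0 x,
    pd (fun y => u y 1) 0 x - pd (fun y => u y 0) 1 x]

/-- Euclidean dot product. -/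
def dot3 (a b : V3) : ℝ := ∑ i, a i * b i

/-- Cross product in ℝ³. -/
def cross (a b : V3) : V3 :=
  ![a 1 * b 2 - a 2 * b 1, a 2 * b 0 - a 0 * b 2, a 0 * b 1 - a 1 * b 0]

open Matrix

theorem hasFDerivAt_dotProduct_add_const {ι : Type*} [Fintype ι] (e : ι → ℝ) (c : ℝ)
    (x : ι → ℝ) :
    HasFDerivAt (fun y => e ⬝ᵥ y + c) (∑ i, e i • (ContinuousLinearMap.proj i : (ι → ℝ) →L[ℝ] ℝ))
      x := by
  have hL : (fun y => e ⬝ᵥ y + c) =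
      fun y => (∑ i, e i • (ContinuousLinearMap.proj i : (ι → ℝ) →L[ℝ] ℝ)) y + c := by
    funext y; simp [dotProduct]
  rw [hL]
  exact (ContinuousLinearMap.hasFDerivAt _).add_const c

theorem pd_comp_dotProduct_add_const {g : ℝ → ℝ} {g' : ℝ} (e : V3) (c : ℝ) {x : V3}
    (hg : HasDerivAt g g' (e ⬝ᵥ x + c)) (j : Fin 3) :
    pd (fun y => g (e ⬝ᵥ y + c)) j x = g' * e j := by
  have h : HasFDerivAt (fun y => g (e ⬝ᵥ y + c)) _ x :=
    hg.comp_hasFDerivAt x (hasFDerivAt_dotProduct_add_const e c x)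
  rw [pd, h.fderiv]
  simp [Pi.single_apply]

section PlaneWave

variable {U : ℝ → V3} {U' : V3} (e : V3) (c : ℝ) {x : V3}

theorem pd_apply_comp_dotProduct_add_const (hU : HasDerivAt U U' (e ⬝ᵥ x + c)) (i j : Fin 3) :
    pd (fun y => U (e ⬝ᵥ y + c) i) j x = U' i * e j :=
  pd_comp_dotProduct_add_const e c (hasDerivAt_pi.1 hU i) j

theorem curl3_comp_dotProduct_add_const (hU : HasDerivAt U U' (e ⬝ᵥ x + c)) :
    curl3 (fun y => U (e ⬝ᵥ y + c)) x = e ⨯₃ U' := by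
  simp only [curl3, pd_apply_comp_dotProduct_add_const e c hU, cross_apply]
  congr! 1 <;> ring_nf

theorem div3_comp_dotProduct_add_const (hU : HasDerivAt U U' (e ⬝ᵥ x + c)) :
    div3 (fun y => U (e ⬝ᵥ y + c)) x = e ⬝ᵥ U' := by
  simp only [div3, pd_apply_comp_dotProduct_add_const e c hU]
  exact Finset.sum_congr rfl fun i _ => mul_comm _ _

end PlaneWave

theorem hasDerivAt_cos_smul_add_sin_smul {E : Type*} [NormedAddCommGroup E] [NormedSpace ℝ E]
    {θ : ℝ → ℝ} {θ' t : ℝ} (hθ : HasDerivAt θ θ' t) (v w : E) :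
    HasDerivAt (fun s => Real.cos (θ s) • v + Real.sin (θ s) • w)
      (θ' • (-Real.sin (θ t) • v + Real.cos (θ t) • w)) t := by
  refine ((hθ.cos.smul_const v).add (hθ.sin.smul_const w)).congr_deriv ?_
  module

theorem hasDerivAt_sq_div_two_mul (n t : ℝ) (hn : n ≠ 0) :
    HasDerivAt (fun s : ℝ => s ^ 2 / (2 * n)) (t / n) t := by
  refine ((hasDerivAt_pow 2 t).div_const (2 * n)).congr_deriv ?_
  field_simp
  ring

section Frame

variable {K : Type*} [Field K] {e v : Fin 3 → K}

theorem cross_smul_add_smul_inv_smul_cross {n : K} (hv : e ⬝ᵥ v = 0) (hn : n ^ 2 = e ⬝ᵥ e)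
    (hn0 : n ≠ 0) (α β : K) :
    e ⨯₃ (α • v + β • (n⁻¹ • v ⨯₃ e)) = n • (β • v - α • (n⁻¹ • v ⨯₃ e)) := by
  have hcross : e ⨯₃ (v ⨯₃ e) = n ^ 2 • v := by
    rw [cross_cross_eq_smul_sub_smul', dotProduct_comm v, hv, hn, zero_smul, sub_zero]
  have hβ : β * n⁻¹ * n ^ 2 = n * β := by field_simp
  have hα : n * (α * n⁻¹) = α := by field_simp
  simp only [map_add, map_smul, ← cross_anticomm v e, hcross, smul_smul, hβ, smul_sub, hα]
  module

theorem dotProduct_smul_add_smul_smul_cross (hv : e ⬝ᵥ v = 0) (α β c : K) :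
    e ⬝ᵥ (α • v + β • (c • v ⨯₃ e)) = 0 := by
  simp [dotProduct_add, dotProduct_smul, hv, dot_cross_self]

end Frame

/-- Explicit global Beltrami field with the nonconstant affine factor
`f(x) = 1 + a x₁ + x₃`: with `e = (a,0,1)` and `u₀ ⟂ e`,
`u = cos(f²/(2|e|)) u₀ + sin(f²/(2|e|)) (u₀ × e)/|e|` satisfies
`curl u = f u` and `div u = 0` on all of ℝ³. -/
theorem affine_factor_beltrami (a : ℝ) (u₀ : V3)
    (horth : dot3 u₀ ![a, 0, 1] = 0) :
    let e : V3 := ![a, 0, 1]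
    let ne : ℝ := Real.sqrt (a ^ 2 + 1)
    let f : V3 → ℝ := fun x => 1 + a * x 0 + x 2
    let u : V3 → V3 := fun x =>
      Real.cos ((f x) ^ 2 / (2 * ne)) • u₀
        + Real.sin ((f x) ^ 2 / (2 * ne)) • (ne⁻¹ • cross u₀ e)
    ∀ x, curl3 u x = f x • u x ∧ div3 u x = 0 := by
  intro e ne f u x
  have hee : e ⬝ᵥ e = a ^ 2 + 1 := by simp [e, dotProduct, Fin.sum_univ_three]; ring
  have hne : ne ^ 2 = e ⬝ᵥ e := by rw [hee]; exact Real.sq_sqrt (by positivity)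
  have hne0 : ne ≠ 0 := (Real.sqrt_pos.2 (by positivity)).ne'
  have hv : e ⬝ᵥ u₀ = 0 := by rw [dotProduct_comm]; exact horth
  have hf : ∀ y, f y = e ⬝ᵥ y + 1 := fun y => by
    simp [f, e, dotProduct, Fin.sum_univ_three]; ring
  set w := ne⁻¹ • u₀ ⨯₃ e
  set U : ℝ → V3 := fun t => Real.cos (t ^ 2 / (2 * ne)) • u₀ + Real.sin (t ^ 2 / (2 * ne)) • w
  have hu : u = fun y => U (e ⬝ᵥ y + 1) := funext fun y => by simp only [u, U, hf]; rfl
  have hU := hasDerivAt_cos_smul_add_sin_smul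
    (hasDerivAt_sq_div_two_mul ne (e ⬝ᵥ x + 1) hne0) u₀ w
  rw [hu, curl3_comp_dotProduct_add_const e 1 hU, div3_comp_dotProduct_add_const e 1 hU, hf]
  refine ⟨?_, by rw [dotProduct_smul, dotProduct_smul_add_smul_smul_cross hv, smul_zero]⟩
  rw [map_smul, cross_smul_add_smul_inv_smul_cross hv hne hne0, smul_smul,
    div_mul_cancel₀ _ hne0]
  module
end

section
/- For u₀, e ∈ ℝ³ with u₀ ⊥ e and e ≠ 0, and any C¹ function θ : ℝ³ → ℝ, let u(x) := cos(θ(x))·u₀ + sin(θ(x))·(u₀ × e)/|e|; if ∇θ is everywhere parallel to e, say ∇θ = λ(x)·e/|e| for a scalar function λ, then curl u = λ·u and div u = 0. -/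
lemma pd_comp (θ : V3 → ℝ) (hθ : ContDiff ℝ 1 θ) (a b : ℝ) (i : Fin 3) (x : V3) :
    pd (fun y => Real.cos (θ y) * a + Real.sin (θ y) * b) i x
      = (-Real.sin (θ x) * a + Real.cos (θ x) * b) * pd θ i x := by
  have hd : DifferentiableAt ℝ θ x := (hθ.differentiable one_ne_zero) x
  have hθ' : HasFDerivAt θ (fderiv ℝ θ x) x := hd.hasFDerivAt
  have hcos : HasFDerivAt (fun y => Real.cos (θ y))
      ((-Real.sin (θ x)) • fderiv ℝ θ x) x :=
    (Real.hasDerivAt_cos (θ x)).comp_hasFDerivAt x hθ'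
  have hsin : HasFDerivAt (fun y => Real.sin (θ y))
      ((Real.cos (θ x)) • fderiv ℝ θ x) x :=
    (Real.hasDerivAt_sin (θ x)).comp_hasFDerivAt x hθ'
  have h : HasFDerivAt (fun y => Real.cos (θ y) * a + Real.sin (θ y) * b)
      ((-Real.sin (θ x) * a + Real.cos (θ x) * b) • fderiv ℝ θ x) x := by
    have := (hcos.mul_const a).add (hsin.mul_const b)
    refine this.congr_fderiv ?_
    ext v
    simp [ContinuousLinearMap.smul_apply]
    ring
  rw [pd, h.fderiv]
  simp [pd]

/-- If `u₀ ⟂ e`, `e ≠ 0`, and `∇θ` is everywhere parallel to `e`, say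
`∇θ = λ(x) e/|e|`, then `u = cos θ · u₀ + sin θ · (u₀ × e)/|e|` satisfies
`curl u = λ u` and `div u = 0`. -/
theorem rotating_beltrami (u₀ e : V3) (he : e ≠ 0)
    (horth : dot3 u₀ e = 0)
    (θ lam : V3 → ℝ) (hθ : ContDiff ℝ 1 θ)
    (hpar : ∀ x, grad θ x = lam x • ((Real.sqrt (dot3 e e))⁻¹ • e)) :
    let u : V3 → V3 := fun x =>
      Real.cos (θ x) • u₀
        + Real.sin (θ x) • ((Real.sqrt (dot3 e e))⁻¹ • cross u₀ e)
    ∀ x, curl3 u x = lam x • u x ∧ div3 u x = 0 := by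
  intro u x
  set c : ℝ := (Real.sqrt (dot3 e e))⁻¹ with hc
  -- positivity of dot3 e e
  have hs : 0 < dot3 e e := by
    obtain ⟨i, hi⟩ := Function.ne_iff.mp he
    have hi0 : e i ≠ 0 := by simpa using hi
    exact Finset.sum_pos' (fun j _ => mul_self_nonneg (e j))
      ⟨i, Finset.mem_univ i, mul_self_pos.mpr hi0⟩
  have hsq : Real.sqrt (dot3 e e) > 0 := Real.sqrt_pos.mpr hs
  have hcs : c * c * dot3 e e = 1 := by
    rw [hc]
    field_simp
    rw [Real.sq_sqrt hs.le]
  have hcs' : c * c * (e 0 * e 0 + e 1 * e 1 + e 2 * e 2) = 1 := by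
    rw [← hcs, dot3, Fin.sum_univ_three]
  have horth' : u₀ 0 * e 0 + u₀ 1 * e 1 + u₀ 2 * e 2 = 0 := by
    rw [← horth, dot3, Fin.sum_univ_three]
  have hgrad : ∀ i : Fin 3, pd θ i x = lam x * (c * e i) := by
    intro i
    have := congrFun (hpar x) i
    simpa [grad, Pi.smul_apply, smul_eq_mul] using this
  have hpd : ∀ j i : Fin 3, pd (fun y => u y j) i x
      = (-Real.sin (θ x) * u₀ j + Real.cos (θ x) * (c * cross u₀ e j))
        * (lam x * (c * e i)) := by
    intro j i
    have heq : (fun y => u y j)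
        = fun y => Real.cos (θ y) * u₀ j + Real.sin (θ y) * (c * cross u₀ e j) := by
      funext y
      simp [u, Pi.add_apply, Pi.smul_apply, smul_eq_mul]
      exact Or.inl (Or.inl hc.symm)
    rw [heq, pd_comp θ hθ, hgrad i]
  constructor
  · funext k
    have hu : ∀ j : Fin 3, u x j
        = Real.cos (θ x) * u₀ j + Real.sin (θ x) * (c * cross u₀ e j) := by
      intro j; simp [u, Pi.add_apply, Pi.smul_apply, smul_eq_mul]; exact Or.inl (Or.inl hc.symm)
    fin_cases k <;>
      · simp [curl3, hpd, hu, cross, Pi.smul_apply, smul_eq_mul]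
        ring_nf
        first
        | linear_combination (lam x * Real.cos (θ x) * u₀ 0) * hcs'
            - (lam x * Real.cos (θ x) * c * c * e 0) * horth'
        | linear_combination (lam x * Real.cos (θ x) * u₀ 1) * hcs'
            - (lam x * Real.cos (θ x) * c * c * e 1) * horth'
        | linear_combination (lam x * Real.cos (θ x) * u₀ 2) * hcs'
            - (lam x * Real.cos (θ x) * c * c * e 2) * horth'
  · simp only [div3, Fin.sum_univ_three, hpd, cross,
      Matrix.cons_val_zero, Matrix.cons_val_one, Matrix.head_cons,
      Matrix.cons_val_two, Matrix.tail_cons]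
    linear_combination (-(lam x * c * Real.sin (θ x))) * horth'
end
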